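/- arXiv:2205.01985 — 2 statements merged into one kernel-verified Lean document; each statement's English description precedes it below -/
import Mathlib

section
/- Let G=(V,E) be a finite simple undirected graph with β_e > 1 for all e ∈ E and 0 < λ_v ≤ 1 for all v ∈ V, and let the weighted random cluster model have edge parameters q_e = 1 − 1/β_e and vertex weights λ. Then for every S ⊆ E, Σ_{σ∈{0,1}^V} π_Ising(σ) · P_{I→R}(σ, S) = π_wrc(S), and for every σ ∈ {0,1}^V, Σ_{S⊆E} π_wrc(S) · P_{R→I}(S, σ) = π_Ising(σ). That is, π_Ising P_{I→R} = π_wrc and π_wrc P_{R→I} = π_Ising. -/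
open Finset
open scoped Classical

noncomputable section

variable {V : Type*} [Fintype V] [DecidableEq V]

/-- The vertex set of the connected component of `v` in the graph `(V, S)`. -/
def compOf (S : Finset (Sym2 V)) (v : V) : Finset V :=
  Finset.univ.filter fun u => (SimpleGraph.fromEdgeSet (↑S : Set (Sym2 V))).Reachable v u

/-- `κ(V,S)`: the set of vertex sets of connected components of the graph `(V, S)`. -/
def kappa (S : Finset (Sym2 V)) : Finset (Finset V) :=
  Finset.univ.image (compOf S)

/-- `∏_{C ∈ κ(V,S)} (1 + ∏_{u ∈ C} λ_u)`. -/
def clusterProd (S : Finset (Sym2 V)) (lam : V → ℝ) : ℝ :=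
  ∏ C ∈ kappa S, (1 + ∏ u ∈ C, lam u)

/-- Weight of an edge subset `S ⊆ E₀` in the weighted random cluster model. -/
def wtWRC (E₀ : Finset (Sym2 V)) (q : Sym2 V → ℝ) (lam : V → ℝ) (S : Finset (Sym2 V)) : ℝ :=
  (∏ e ∈ S, q e) * (∏ f ∈ E₀ \ S, (1 - q f)) * clusterProd S lam

/-- Partition function of the weighted random cluster model. -/
def ZWRC (E₀ : Finset (Sym2 V)) (q : Sym2 V → ℝ) (lam : V → ℝ) : ℝ :=
  ∑ S ∈ E₀.powerset, wtWRC E₀ q lam S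

/-- The weighted random cluster distribution. -/
def piWRC (E₀ : Finset (Sym2 V)) (q : Sym2 V → ℝ) (lam : V → ℝ) (S : Finset (Sym2 V)) : ℝ :=
  wtWRC E₀ q lam S / ZWRC E₀ q lam

/-- The monochromatic edges of a spin configuration `σ`. -/
def monoEdges (E₀ : Finset (Sym2 V)) (σ : V → Bool) : Finset (Sym2 V) :=
  E₀.filter fun e => (e.map σ).IsDiag

/-- Weight of a spin configuration in the Ising model. -/
def wtIsing (E₀ : Finset (Sym2 V)) (β : Sym2 V → ℝ) (lam : V → ℝ) (σ : V → Bool) : ℝ :=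
  (∏ e ∈ monoEdges E₀ σ, β e) * ∏ v : V, (if σ v then lam v else 1)

/-- Ising partition function. -/
def ZIsing (E₀ : Finset (Sym2 V)) (β : Sym2 V → ℝ) (lam : V → ℝ) : ℝ :=
  ∑ σ : V → Bool, wtIsing E₀ β lam σ

/-- Ising Gibbs distribution. -/
def piIsing (E₀ : Finset (Sym2 V)) (β : Sym2 V → ℝ) (lam : V → ℝ) (σ : V → Bool) : ℝ :=
  wtIsing E₀ β lam σ / ZIsing E₀ β lam

/-- Vertices of odd degree in the graph `(V, S)`. -/
def oddVerts (S : Finset (Sym2 V)) : Finset V :=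
  Finset.univ.filter fun v => Odd (S.filter fun e => v ∈ e).card

/-- Weight of an edge subset in the subgraph-world model. -/
def wtSG (E₀ : Finset (Sym2 V)) (p : Sym2 V → ℝ) (η : V → ℝ) (S : Finset (Sym2 V)) : ℝ :=
  (∏ e ∈ S, p e) * (∏ f ∈ E₀ \ S, (1 - p f)) * ∏ v ∈ oddVerts S, η v

/-- Subgraph-world partition function. -/
def ZSG (E₀ : Finset (Sym2 V)) (p : Sym2 V → ℝ) (η : V → ℝ) : ℝ :=
  ∑ S ∈ E₀.powerset, wtSG E₀ p η S

/-- Subgraph-world distribution. -/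
def piSG (E₀ : Finset (Sym2 V)) (p : Sym2 V → ℝ) (η : V → ℝ) (S : Finset (Sym2 V)) : ℝ :=
  wtSG E₀ p η S / ZSG E₀ p η

/-- The transformation `P_{I→R}` from Ising configurations to edge subsets. -/
def PIR (E₀ : Finset (Sym2 V)) (β : Sym2 V → ℝ) (σ : V → Bool) (S : Finset (Sym2 V)) : ℝ :=
  if S ⊆ monoEdges E₀ σ then
    (∏ e ∈ S, (1 - (β e)⁻¹)) * ∏ f ∈ monoEdges E₀ σ \ S, (β f)⁻¹
  else 0

/-- The transformation `P_{R→I}` from edge subsets to Ising configurations. -/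
def PRI (E₀ : Finset (Sym2 V)) (lam : V → ℝ) (S : Finset (Sym2 V)) (σ : V → Bool) : ℝ :=
  if S ⊆ monoEdges E₀ σ then
    ∏ C ∈ kappa S, ((∏ v ∈ C, if σ v then lam v else 1) / (1 + ∏ v ∈ C, lam v))
  else 0

/-- Swendsen-Wang dynamics for the Ising model: `P_{I→R} ⬝ P_{R→I}`. -/
def PSWIsing (E₀ : Finset (Sym2 V)) (β : Sym2 V → ℝ) (lam : V → ℝ) (σ τ : V → Bool) : ℝ :=
  ∑ S ∈ E₀.powerset, PIR E₀ β σ S * PRI E₀ lam S τ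

/-- Swendsen-Wang dynamics for the weighted random cluster model: `P_{R→I} ⬝ P_{I→R}`. -/
def PSWwrc (E₀ : Finset (Sym2 V)) (β : Sym2 V → ℝ) (lam : V → ℝ)
    (S S' : Finset (Sym2 V)) : ℝ :=
  ∑ σ : V → Bool, PRI E₀ lam S σ * PIR E₀ β σ S'

/-- Lazy edge-flipping (Metropolis) dynamics for a distribution `pi` on subsets of `E₀`. -/
def PEF (E₀ : Finset (Sym2 V)) (pi : Finset (Sym2 V) → ℝ) (x y : Finset (Sym2 V)) : ℝ :=
  if x = y then
    1 - (1 / (2 * (E₀.card : ℝ))) * ∑ e ∈ E₀, min 1 (pi (symmDiff x {e}) / pi x)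
  else if (symmDiff x y).card = 1 then
    (1 / (2 * (E₀.card : ℝ))) * min 1 (pi y / pi x)
  else 0

/-- Variance of `f` with respect to a distribution `pi` supported on `states`. -/
def varOn {α : Type*} (states : Finset α) (pi f : α → ℝ) : ℝ :=
  (∑ x ∈ states, pi x * f x ^ 2) - (∑ x ∈ states, pi x * f x) ^ 2

/-- Dirichlet form of a Markov kernel `P` with stationary distribution `pi` on `states`. -/
def dirichletOn {α : Type*} (states : Finset α) (pi : α → ℝ) (P : α → α → ℝ) (f : α → ℝ) : ℝ :=
  ∑ x ∈ states, pi x * f x * (f x - ∑ y ∈ states, P x y * f y)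

/-- Spectral gap of a reversible Markov kernel `P` with stationary distribution `pi`. -/
def gapOn {α : Type*} (states : Finset α) (pi : α → ℝ) (P : α → α → ℝ) : ℝ :=
  sInf ((fun f : α → ℝ => dirichletOn states pi P f / varOn states pi f) ''
    {f | varOn states pi f ≠ 0})

/-- Total variation distance between two distributions on `states`. -/
def dTV {α : Type*} (states : Finset α) (μ ν : α → ℝ) : ℝ :=
  (1 / 2) * ∑ z ∈ states, |μ z - ν z|

/-- `t`-step transition probabilities of the Markov kernel `P` on state space `states`. -/
def kpow {α : Type*} (states : Finset α) (P : α → α → ℝ) : ℕ → α → α → ℝ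
  | 0 => fun x y => if x = y then 1 else 0
  | (t + 1) => fun x y => ∑ z ∈ states, P x z * kpow states P t z y

/-!
Both transitions come from one joint weight on pairs `(σ, S)`:
`wtIsing σ · P_{I→R}(σ, S) = (∏_{e ∈ E} β_e) · wtWRC S · P_{R→I}(S, σ)`.
Both sides vanish unless `S ⊆ M(σ)`; then `σ` is constant on every cluster of `(V, S)`, so the
factor `∏_C (1 + λ_C)` of `wtWRC S` cancels the denominators of `P_{R→I}`, and
`∏_E β · ∏_{E \ S} β⁻¹` matches `∏_{M(σ)} β · ∏_{M(σ) \ S} β⁻¹`. Both kernels are stochastic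
(`P_{R→I}(S, ·)` colours the clusters independently), so summing the joint weight over either
coordinate yields the other model's weight and `Z_Ising = (∏_E β) · Z_wrc`.
-/

theorem normalize_mul_kernel_eq_of_joint {α γ : Type*} {s : Finset α} {t : Finset γ}
    {f : α → ℝ} {g : γ → ℝ} {P : α → γ → ℝ} {Q : γ → α → ℝ} {c : ℝ} (hc : c ≠ 0)
    (hP : ∀ a ∈ s, ∑ b ∈ t, P a b = 1) (hQ : ∀ b ∈ t, ∑ a ∈ s, Q b a = 1)
    (hjoint : ∀ a ∈ s, ∀ b ∈ t, f a * P a b = c * (g b * Q b a)) :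
    (∀ b ∈ t, ∑ a ∈ s, f a / (∑ a ∈ s, f a) * P a b = g b / ∑ b ∈ t, g b) ∧
      ∀ a ∈ s, ∑ b ∈ t, g b / (∑ b ∈ t, g b) * Q b a = f a / ∑ a ∈ s, f a := by
  have hleft : ∀ b ∈ t, ∑ a ∈ s, f a * P a b = c * g b := fun b hb => by
    rw [sum_congr rfl fun a ha => hjoint a ha b hb, ← mul_sum, ← mul_sum, hQ b hb, mul_one]
  have hright : ∀ a ∈ s, ∑ b ∈ t, g b * Q b a = f a / c := fun a ha => by
    rw [eq_div_iff hc, sum_mul]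
    calc ∑ b ∈ t, g b * Q b a * c = ∑ b ∈ t, f a * P a b :=
          sum_congr rfl fun b hb => by rw [hjoint a ha b hb, mul_comm]
      _ = f a := by rw [← mul_sum, hP a ha, mul_one]
  have hZ : ∑ a ∈ s, f a = c * ∑ b ∈ t, g b := calc
    ∑ a ∈ s, f a = ∑ a ∈ s, ∑ b ∈ t, f a * P a b :=
      sum_congr rfl fun a ha => by rw [← mul_sum, hP a ha, mul_one]
    _ = ∑ b ∈ t, c * g b := by rw [sum_comm]; exact sum_congr rfl hleft
    _ = c * ∑ b ∈ t, g b := (mul_sum ..).symm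
  refine ⟨fun b hb => ?_, fun a ha => ?_⟩
  · simp_rw [div_mul_eq_mul_div, ← sum_div, hleft b hb, hZ, mul_div_mul_left _ _ hc]
  · simp_rw [div_mul_eq_mul_div, ← sum_div, hright a ha, hZ, div_div]

theorem SimpleGraph.Reachable.apply_eq_of_forall_adj {α β : Type*} {G : SimpleGraph α}
    {f : α → β} (hf : ∀ u v, G.Adj u v → f u = f v) {u v : α} (h : G.Reachable u v) :
    f u = f v := by
  obtain ⟨w⟩ := h
  induction w with
  | nil => rfl
  | cons hadj _ ih => exact (hf _ _ hadj).trans ih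

theorem SimpleGraph.sum_filter_forall_adj_eq_sum_comp {α β M : Type*} [Fintype α]
    [DecidableEq α] [Fintype β] [DecidableEq β] [AddCommMonoid M] (G : SimpleGraph α)
    [Fintype G.ConnectedComponent] [DecidablePred fun σ : α → β => ∀ u v, G.Adj u v → σ u = σ v]
    (F : (α → β) → M) :
    ∑ σ : α → β with ∀ u v, G.Adj u v → σ u = σ v, F σ =
      ∑ c : G.ConnectedComponent → β, F (c ∘ G.connectedComponentMk) := by
  have hinj : Function.Injective fun c : G.ConnectedComponent → β => c ∘ G.connectedComponentMk :=
    Function.Surjective.injective_comp_right Quot.mk_surjective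
  rw [← sum_image fun c _ d _ h => hinj h]
  congr 1
  ext σ
  simp only [mem_filter, mem_univ, true_and, mem_image]
  constructor
  · intro hσ
    exact ⟨ConnectedComponent.lift σ fun u v p _ => Reachable.apply_eq_of_forall_adj hσ ⟨p⟩, rfl⟩
  · rintro ⟨c, rfl⟩ u v hadj
    exact congrArg c (ConnectedComponent.connectedComponentMk_eq_of_adj hadj)

open SimpleGraph

theorem prod_kappa {M : Type*} [CommMonoid M] (S : Finset (Sym2 V)) (g : Finset V → M) :
    ∏ C ∈ kappa S, g C = ∏ K : (fromEdgeSet (S : Set (Sym2 V))).ConnectedComponent,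
      g (univ.filter fun v => (fromEdgeSet (S : Set (Sym2 V))).connectedComponentMk v = K) := by
  set H := fromEdgeSet (S : Set (Sym2 V))
  have hcomp : compOf S = (fun K => univ.filter fun v => H.connectedComponentMk v = K) ∘
      H.connectedComponentMk := by
    ext v u
    simp [compOf, H, ConnectedComponent.eq, reachable_comm]
  have hsurj : Function.Surjective H.connectedComponentMk := Quot.mk_surjective
  rw [kappa, hcomp, ← image_image, image_univ_of_surjective hsurj, prod_image]
  intro K _ K' _ hKK'
  induction K using ConnectedComponent.ind with
  | h v => simpa using (Finset.ext_iff.1 hKK' v).1 (by simp)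

theorem prod_kappa_prod {M : Type*} [CommMonoid M] (S : Finset (Sym2 V)) (g : V → M) :
    ∏ C ∈ kappa S, ∏ v ∈ C, g v = ∏ v, g v := by
  rw [prod_kappa]
  exact prod_fiberwise univ _ g

theorem subset_monoEdges_iff {V : Type*} {E₀ S : Finset (Sym2 V)} {σ : V → Bool} :
    S ⊆ monoEdges E₀ σ ↔
      S ⊆ E₀ ∧ ∀ u v, (fromEdgeSet (S : Set (Sym2 V))).Adj u v → σ u = σ v := by
  simp only [subset_iff, monoEdges, mem_filter, fromEdgeSet_adj, mem_coe]
  constructor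
  · intro h
    exact ⟨fun e he => (h he).1, fun u v huv => by simpa using (h huv.1).2⟩
  · rintro ⟨hE, hσ⟩ e he
    refine ⟨hE he, ?_⟩
    induction e using Sym2.ind with
    | h u v =>
      rcases eq_or_ne u v with rfl | huv
      · simp
      · simpa using hσ u v ⟨he, huv⟩

theorem sum_PIR_eq_one {V : Type*} [DecidableEq V] (E₀ : Finset (Sym2 V)) (β : Sym2 V → ℝ)
    (σ : V → Bool) :
    ∑ S ∈ E₀.powerset, PIR E₀ β σ S = 1 := by
  have hM : monoEdges E₀ σ ⊆ E₀ := filter_subset _ E₀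
  have hPIR : ∀ S ∈ (monoEdges E₀ σ).powerset, PIR E₀ β σ S =
      (∏ e ∈ S, (1 - (β e)⁻¹)) * ∏ f ∈ monoEdges E₀ σ \ S, (β f)⁻¹ :=
    fun S hS => if_pos (mem_powerset.1 hS)
  rw [← sum_subset (f := PIR E₀ β σ) (powerset_mono.2 hM) fun S _ hS =>
      if_neg (mt mem_powerset.2 hS),
    sum_congr rfl hPIR, ← prod_add]
  simp

theorem sum_PRI_eq_one (E₀ : Finset (Sym2 V)) {lam : V → ℝ} (hlam : ∀ v, 0 ≤ lam v)
    {S : Finset (Sym2 V)} (hS : S ⊆ E₀) :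
    ∑ σ : V → Bool, PRI E₀ lam S σ = 1 := by
  set H := fromEdgeSet (S : Set (Sym2 V))
  set w : H.ConnectedComponent → Bool → ℝ := fun K b =>
    (∏ v ∈ univ.filter (H.connectedComponentMk · = K), if b then lam v else 1) /
      (1 + ∏ v ∈ univ.filter (H.connectedComponentMk · = K), lam v) with hw
  have hw_sum (K : H.ConnectedComponent) : ∑ b, w K b = 1 := by
    have : 0 < 1 + ∏ v ∈ univ.filter (H.connectedComponentMk · = K), lam v :=
      add_pos_of_pos_of_nonneg one_pos (prod_nonneg fun v _ => hlam v)
    simp only [hw, Fintype.sum_bool, ite_true, Bool.false_eq_true, ite_false, prod_const_one]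
    rw [← add_div, add_comm, div_self this.ne']
  simp only [PRI]
  rw [← sum_filter]
  simp_rw [subset_monoEdges_iff, hS, true_and]
  rw [sum_filter_forall_adj_eq_sum_comp]
  calc _ = ∑ c : H.ConnectedComponent → Bool, ∏ K, w K (c K) :=
        sum_congr rfl fun c _ => by
          rw [prod_kappa]
          refine prod_congr rfl fun K _ => congrArg (· / _) (prod_congr rfl fun v hv => ?_)
          rw [Function.comp_apply, (mem_filter.1 hv).2]
    _ = ∏ K, ∑ b, w K b := (Fintype.prod_sum w).symm
    _ = 1 := prod_eq_one fun K _ => hw_sum K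

theorem clusterProd_mul_prod_kappa (S : Finset (Sym2 V)) {lam : V → ℝ} (hlam : ∀ v, 0 ≤ lam v)
    (σ : V → Bool) :
    clusterProd S lam *
        ∏ C ∈ kappa S, ((∏ v ∈ C, if σ v then lam v else 1) / (1 + ∏ v ∈ C, lam v)) =
      ∏ v, if σ v then lam v else 1 := by
  rw [clusterProd, ← prod_mul_distrib, ← prod_kappa_prod S]
  exact prod_congr rfl fun C _ =>
    mul_div_cancel₀ _ (add_pos_of_pos_of_nonneg one_pos (prod_nonneg fun v _ => hlam v)).ne'

theorem wtIsing_mul_PIR (E₀ : Finset (Sym2 V)) {β : Sym2 V → ℝ} (hβ : ∀ e ∈ E₀, β e ≠ 0)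
    {lam : V → ℝ} (hlam : ∀ v, 0 ≤ lam v) (σ : V → Bool) (S : Finset (Sym2 V)) :
    wtIsing E₀ β lam σ * PIR E₀ β σ S =
      (∏ e ∈ E₀, β e) * (wtWRC E₀ (fun e => 1 - (β e)⁻¹) lam S * PRI E₀ lam S σ) := by
  by_cases hSM : S ⊆ monoEdges E₀ σ
  swap
  · simp [PIR, PRI, hSM]
  have hM : monoEdges E₀ σ ⊆ E₀ := filter_subset _ E₀
  have hMS : ∏ e ∈ monoEdges E₀ σ \ S, β e ≠ 0 :=
    prod_ne_zero_iff.2 fun e he => hβ e (hM (sdiff_subset he))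
  have hES : ∏ e ∈ E₀ \ S, β e ≠ 0 := prod_ne_zero_iff.2 fun e he => hβ e (sdiff_subset he)
  rw [wtIsing, PIR, if_pos hSM, wtWRC, PRI, if_pos hSM, ← prod_sdiff hSM,
    ← prod_sdiff (hSM.trans hM), ← clusterProd_mul_prod_kappa S hlam σ]
  simp only [sub_sub_cancel, prod_inv_distrib]
  field_simp

/-- Stationarity: `π_Ising P_{I→R} = π_wrc` and `π_wrc P_{R→I} = π_Ising`,
where the weighted random cluster model has `q_e = 1 − 1/β_e`. -/
theorem pir_pri_stationary {V : Type*} [Fintype V] [DecidableEq V]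
    (G : SimpleGraph V) [DecidableRel G.Adj]
    (β : Sym2 V → ℝ) (lam : V → ℝ)
    (hβ : ∀ e ∈ G.edgeFinset, 1 < β e)
    (hlam : ∀ v : V, 0 < lam v ∧ lam v ≤ 1) :
    (∀ S ∈ G.edgeFinset.powerset,
      (∑ σ : V → Bool, piIsing G.edgeFinset β lam σ * PIR G.edgeFinset β σ S) =
        piWRC G.edgeFinset (fun e => 1 - (β e)⁻¹) lam S) ∧
    (∀ σ : V → Bool,
      (∑ S ∈ G.edgeFinset.powerset,
        piWRC G.edgeFinset (fun e => 1 - (β e)⁻¹) lam S * PRI G.edgeFinset lam S σ) =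
        piIsing G.edgeFinset β lam σ) := by
  have hβ0 : ∀ e ∈ G.edgeFinset, β e ≠ 0 := fun e he => (zero_lt_one.trans (hβ e he)).ne'
  have hlam0 : ∀ v, 0 ≤ lam v := fun v => (hlam v).1.le
  have := normalize_mul_kernel_eq_of_joint (s := univ) (f := wtIsing G.edgeFinset β lam)
    (g := wtWRC G.edgeFinset (fun e => 1 - (β e)⁻¹) lam) (prod_ne_zero_iff.2 hβ0)
    (fun σ _ => sum_PIR_eq_one _ β σ) (fun S hS => sum_PRI_eq_one _ hlam0 (mem_powerset.1 hS))
    (fun σ _ S _ => wtIsing_mul_PIR _ hβ0 hlam0 σ S)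
  exact ⟨this.1, fun σ => this.2 σ (mem_univ σ)⟩

end
end

section
/- Let G=(V,E) be a finite simple undirected graph, let 0 < p_e < 1/2 for all e ∈ E, let 0 < λ_v ≤ 1 for all v ∈ V, and set η_v = (1−λ_v)/(1+λ_v). Then for every R ⊆ E, π_wrc(R) = Σ_{S⊆R} π_sg(S) · ∏_{e∈R\S} (p_e/(1−p_e)) · ∏_{f∈E\R} (1 − p_f/(1−p_f)), where π_sg is the subgraph-world distribution with parameters (p, η) and π_wrc is the weighted random cluster distribution with edge parameters (2p_e)_{e∈E} and vertex weights λ. Equivalently: if S is sampled from the subgraph-world model (G; p, η) and each edge e ∈ E\S is then independently added with probability p_e/(1−p_e), the resulting random edge set has distribution π_wrc(G; 2p, λ). -/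
open Finset
open scoped Classical

noncomputable section

variable {V : Type*} [Fintype V] [DecidableEq V]

/-!
Write `w(σ) = ∏_{v : σ v} λ_v` for spin configurations `σ : V → Bool` and `s(b) = ±1` for the
sign of a spin. Since `(1 + λ_v) η_v = 1 - λ_v = ∑_b w_v(b) s(b)`, expanding
`∏_v (1 + λ_v) ∏_{v ∈ odd(S)} η_v` over spins gives `∑_σ w(σ) ∏_{e ∈ S} ε_σ(e)`, where
`ε_σ(uv) = s(σ_u) s(σ_v)`. Summing over `S ⊆ R` yields `∑_σ w(σ) ∏_{e ∈ R} (1 + ε_σ(e))`, and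
`1 + ε_σ(e)` is `2` or `0` according as `e` is monochromatic, so this is
`2^{|R|} ∑_{σ constant on the components of R} w(σ) = 2^{|R|} ∏_{C ∈ κ(R)} (1 + ∏_{u ∈ C} λ_u)`.
With `(1 - p) · p/(1 - p) = p` and `(1 - p)(1 - p/(1 - p)) = 1 - 2p`, this says that the mass the
coupling gives to `R` is `wt_wrc(R; 2p, λ) / ∏_v (1 + λ_v)`; summing over `R`, the partition
functions agree up to the same factor.
-/

section FactorsThrough

variable {α ι β M : Type*} [Fintype α] [Fintype ι] [DecidableEq ι] [Fintype β]

theorem sum_filter_factorsThrough [DecidableEq α] [AddCommMonoid M] [Nonempty β] {π : α → ι}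
    (hπ : Function.Surjective π) (F : (α → β) → M) :
    ∑ σ ∈ univ.filter (fun σ : α → β => σ.FactorsThrough π), F σ = ∑ τ : ι → β, F (τ ∘ π) := by
  have himage : univ.filter (fun σ : α → β => σ.FactorsThrough π) = univ.image (· ∘ π) := by
    ext σ
    simp [Function.factorsThrough_iff, eq_comm]
  rw [himage, sum_image fun τ _ τ' _ h => hπ.injective_comp_right h]

theorem sum_prod_comp_eq_prod_sum_prod_fiber [CommSemiring M] (π : α → ι) (w : α → β → M) :
    ∑ τ : ι → β, ∏ a, w a (τ (π a)) = ∏ i, ∑ b, ∏ a ∈ univ.filter (π · = i), w a b := by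
  rw [Fintype.prod_sum]
  refine sum_congr rfl fun τ _ => ?_
  rw [← prod_fiberwise univ π]
  refine prod_congr rfl fun i _ => prod_congr rfl fun a ha => ?_
  rw [(mem_filter.1 ha).2]

end FactorsThrough

theorem apply_eq_of_reachable {W β : Type*} {S : Finset (Sym2 W)} {σ : W → β}
    (hσ : ∀ e ∈ S, (e.map σ).IsDiag) {u v : W}
    (h : (SimpleGraph.fromEdgeSet (↑S : Set (Sym2 W))).Reachable u v) : σ u = σ v := by
  obtain ⟨walk⟩ := h
  induction walk with
  | nil => rfl
  | cons hadj _ ih =>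
    have hdiag := hσ _ ((SimpleGraph.fromEdgeSet_adj _).1 hadj).1
    rw [Sym2.map_mk, Sym2.mk_isDiag_iff] at hdiag
    exact hdiag.trans ih

section Components

variable (S : Finset (Sym2 V))

theorem mem_compOf {u v : V} :
    u ∈ compOf S v ↔ (SimpleGraph.fromEdgeSet (↑S : Set (Sym2 V))).Reachable v u := by
  simp [compOf]

theorem compOf_eq_compOf_iff {u v : V} :
    compOf S u = compOf S v ↔ (SimpleGraph.fromEdgeSet (↑S : Set (Sym2 V))).Reachable u v := by
  refine ⟨fun h => ?_, fun h => ?_⟩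
  · have hu := (mem_compOf S).2 (SimpleGraph.Reachable.refl u)
    rw [h, mem_compOf] at hu
    exact hu.symm
  · ext x
    rw [mem_compOf, mem_compOf]
    exact ⟨h.symm.trans, h.trans⟩

theorem compOf_mem_kappa (v : V) : compOf S v ∈ kappa S :=
  mem_image_of_mem _ (mem_univ v)

theorem compOf_eq_iff_mem {C : Finset V} (hC : C ∈ kappa S) {v : V} : compOf S v = C ↔ v ∈ C := by
  obtain ⟨u, -, rfl⟩ := mem_image.1 hC
  rw [compOf_eq_compOf_iff, mem_compOf]
  exact ⟨.symm, .symm⟩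

def toKappa (v : V) : kappa S := ⟨compOf S v, compOf_mem_kappa S v⟩

theorem toKappa_surjective : Function.Surjective (toKappa S) := by
  rintro ⟨C, hC⟩
  obtain ⟨v, -, rfl⟩ := mem_image.1 hC
  exact ⟨v, rfl⟩

theorem factorsThrough_toKappa_iff {β : Type*} {σ : V → β} :
    σ.FactorsThrough (toKappa S) ↔ ∀ e ∈ S, (e.map σ).IsDiag := by
  refine ⟨fun hσ e he => ?_, fun hσ u v huv => ?_⟩
  · induction e using Sym2.ind with
    | _ a b =>
      rw [Sym2.map_mk, Sym2.mk_isDiag_iff]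
      by_cases hab : a = b
      · rw [hab]
      refine hσ (Subtype.ext ((compOf_eq_compOf_iff S).2 ?_))
      exact ((SimpleGraph.fromEdgeSet_adj _).2 ⟨mod_cast he, hab⟩).reachable
  · exact apply_eq_of_reachable hσ ((compOf_eq_compOf_iff S).1 (congrArg Subtype.val huv))

theorem sum_filter_isDiag_prod_eq_prod_kappa {β M : Type*} [Fintype β] [DecidableEq β]
    [Nonempty β] [CommSemiring M] (w : V → β → M) :
    ∑ σ ∈ univ.filter (fun σ : V → β => ∀ e ∈ S, (e.map σ).IsDiag), ∏ v, w v (σ v)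
      = ∏ C ∈ kappa S, ∑ b, ∏ v ∈ C, w v b := by
  rw [filter_congr fun σ _ => (factorsThrough_toKappa_iff S).symm,
    sum_filter_factorsThrough (toKappa_surjective S)]
  simp only [Function.comp_apply]
  rw [sum_prod_comp_eq_prod_sum_prod_fiber, ← prod_coe_sort (kappa S)]
  refine prod_congr rfl fun C _ => ?_
  have hfiber : univ.filter (toKappa S · = C) = (C : Finset V) := by
    ext v
    simp [toKappa, Subtype.ext_iff, compOf_eq_iff_mem S C.2]
  rw [hfiber]

end Components

def spinSign (b : Bool) : ℝ := if b then -1 else 1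

theorem one_add_prod_spinSign_of_not_isDiag (σ : V → Bool) {e : Sym2 V} (he : ¬ e.IsDiag) :
    1 + ∏ v ∈ univ.filter (· ∈ e), spinSign (σ v) = if (e.map σ).IsDiag then 2 else 0 := by
  induction e using Sym2.ind with
  | _ a b =>
    have hab : a ≠ b := fun h => he (Sym2.mk_isDiag_iff.2 h)
    have hpair : univ.filter (· ∈ s(a, b)) = {a, b} := by
      ext v
      simp [Sym2.mem_iff]
    rw [hpair, prod_pair hab]
    cases ha : σ a <;> cases hb : σ b <;> norm_num [spinSign, ha, hb]

theorem prod_pow_card_filter_mem {M : Type*} [CommMonoid M] (S : Finset (Sym2 V)) (f : V → M) :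
    ∏ v, f v ^ (S.filter fun e => v ∈ e).card = ∏ e ∈ S, ∏ v ∈ univ.filter (· ∈ e), f v := by
  simp_rw [← prod_const]
  exact prod_comm' fun v e => by simp [and_comm]

theorem sum_weight_mul_spinSign_pow {l η : ℝ} (h : (1 + l) * η = 1 - l) (d : ℕ) :
    ∑ b : Bool, (if b then l else 1) * spinSign b ^ d = (1 + l) * if Odd d then η else 1 := by
  rcases Nat.even_or_odd d with hd | hd
  · simp [spinSign, hd.neg_one_pow, Nat.not_odd_iff_even.2 hd, add_comm]
  · simp [spinSign, hd.neg_one_pow, hd, h]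
    ring

theorem prod_one_add_mul_prod_oddVerts {lam η : V → ℝ} (hη : ∀ v, (1 + lam v) * η v = 1 - lam v)
    (S : Finset (Sym2 V)) :
    (∏ v, (1 + lam v)) * ∏ v ∈ oddVerts S, η v
      = ∑ σ : V → Bool, (∏ v, if σ v then lam v else 1) *
          ∏ e ∈ S, ∏ v ∈ univ.filter (· ∈ e), spinSign (σ v) := by
  calc (∏ v, (1 + lam v)) * ∏ v ∈ oddVerts S, η v
      = ∏ v, ∑ b : Bool, (if b then lam v else 1) *
          spinSign b ^ (S.filter fun e => v ∈ e).card := by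
        rw [oddVerts, prod_filter, ← prod_mul_distrib]
        exact prod_congr rfl fun v _ => (sum_weight_mul_spinSign_pow (hη v) _).symm
    _ = _ := by
        rw [Fintype.prod_sum]
        refine sum_congr rfl fun σ _ => ?_
        rw [prod_mul_distrib, prod_pow_card_filter_mem]

theorem prod_one_add_mul_sum_prod_oddVerts {R : Finset (Sym2 V)} (hR : ∀ e ∈ R, ¬ e.IsDiag)
    {lam η : V → ℝ} (hη : ∀ v, (1 + lam v) * η v = 1 - lam v) :
    (∏ v, (1 + lam v)) * ∑ S ∈ R.powerset, ∏ v ∈ oddVerts S, η v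
      = 2 ^ #R * clusterProd R lam := by
  set W : (V → Bool) → ℝ := fun σ => ∏ v, if σ v then lam v else 1
  set ε : (V → Bool) → Sym2 V → ℝ := fun σ e => ∏ v ∈ univ.filter (· ∈ e), spinSign (σ v)
  calc (∏ v, (1 + lam v)) * ∑ S ∈ R.powerset, ∏ v ∈ oddVerts S, η v
      = ∑ S ∈ R.powerset, ∑ σ, W σ * ∏ e ∈ S, ε σ e := by
        simp only [mul_sum, prod_one_add_mul_prod_oddVerts hη, W, ε]
    _ = ∑ σ, W σ * ∏ e ∈ R, (1 + ε σ e) := by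
        rw [sum_comm]
        simp only [← mul_sum, prod_one_add]
    _ = 2 ^ #R * ∑ σ ∈ univ.filter (fun σ : V → Bool => ∀ e ∈ R, (e.map σ).IsDiag), W σ := by
        rw [mul_sum, sum_filter]
        refine sum_congr rfl fun σ _ => ?_
        rw [prod_congr rfl fun e he => one_add_prod_spinSign_of_not_isDiag σ (hR e he),
          prod_ite_zero, prod_const]
        split_ifs <;> ring
    _ = 2 ^ #R * ∏ C ∈ kappa R, ∑ b : Bool, ∏ v ∈ C, if b then lam v else 1 := by
        rw [← sum_filter_isDiag_prod_eq_prod_kappa]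
    _ = 2 ^ #R * clusterProd R lam := by
        simp [clusterProd, add_comm]

/-- The probability that adding each element of `E₀ \ S` independently with probability `r`
yields `R` (for `S ⊆ R ⊆ E₀`). -/
def sprinkleProb {α : Type*} [DecidableEq α] (E₀ : Finset α) (r : α → ℝ) (S R : Finset α) : ℝ :=
  (∏ e ∈ R \ S, r e) * ∏ f ∈ E₀ \ R, (1 - r f)

theorem sum_Icc_sprinkleProb {α : Type*} [DecidableEq α] {E₀ S : Finset α} (hS : S ⊆ E₀)
    (r : α → ℝ) : ∑ R ∈ Icc S E₀, sprinkleProb E₀ r S R = 1 := by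
  have hdisj : ∀ T ∈ (E₀ \ S).powerset, Disjoint S T := fun T hT =>
    disjoint_of_subset_right (mem_powerset.1 hT) disjoint_sdiff
  have hinj : Set.InjOn (S ∪ ·) ↑(E₀ \ S).powerset := fun T hT T' hT' h => by
    rw [← union_sdiff_cancel_left (hdisj T hT), ← union_sdiff_cancel_left (hdisj T' hT')]
    exact congrArg (· \ S) h
  rw [Icc_eq_image_powerset hS, sum_image hinj]
  calc ∑ T ∈ (E₀ \ S).powerset, sprinkleProb E₀ r S (S ∪ T)
      = ∑ T ∈ (E₀ \ S).powerset, (∏ e ∈ T, r e) * ∏ f ∈ (E₀ \ S) \ T, (1 - r f) := by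
        refine sum_congr rfl fun T hT => ?_
        rw [sprinkleProb, union_sdiff_cancel_left (hdisj T hT), sdiff_union_distrib,
          Finset.sdiff_sdiff_left']
    _ = ∏ e ∈ E₀ \ S, (r e + (1 - r e)) := (prod_add _ _ _).symm
    _ = 1 := by simp

section Coupling

variable {E₀ : Finset (Sym2 V)} {p : Sym2 V → ℝ} {lam η : V → ℝ}

theorem wtSG_mul_sprinkleProb {R S : Finset (Sym2 V)} (hSR : S ⊆ R) (hRE : R ⊆ E₀)
    (hp : ∀ e ∈ E₀, p e ≠ 1) :
    wtSG E₀ p η S * sprinkleProb E₀ (fun e => p e / (1 - p e)) S R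
      = (∏ e ∈ R, p e) * (∏ f ∈ E₀ \ R, (1 - 2 * p f)) * ∏ v ∈ oddVerts S, η v := by
  have hsub : ∀ e ∈ E₀, 1 - p e ≠ 0 := fun e he => sub_ne_zero.2 (hp e he).symm
  have hadded : (∏ e ∈ R \ S, (1 - p e)) * ∏ e ∈ R \ S, p e / (1 - p e) = ∏ e ∈ R \ S, p e := by
    rw [← prod_mul_distrib]
    refine prod_congr rfl fun e he => ?_
    have := hsub e (hRE (mem_sdiff.1 he).1)
    field_simp
  have hrest : (∏ f ∈ E₀ \ R, (1 - p f)) * ∏ f ∈ E₀ \ R, (1 - p f / (1 - p f))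
      = ∏ f ∈ E₀ \ R, (1 - 2 * p f) := by
    rw [← prod_mul_distrib]
    refine prod_congr rfl fun f hf => ?_
    have := hsub f (mem_sdiff.1 hf).1
    field_simp
    ring
  rw [wtSG, sprinkleProb, ← prod_sdiff (sdiff_subset_sdiff hRE (subset_refl S)),
    sdiff_sdiff_sdiff_cancel_right hSR, ← prod_sdiff hSR, ← hadded, ← hrest]
  ring

theorem wtWRC_two_mul_eq {R : Finset (Sym2 V)} (hRE : R ⊆ E₀) (hE₀ : ∀ e ∈ E₀, ¬ e.IsDiag)
    (hp : ∀ e ∈ E₀, p e ≠ 1) (hη : ∀ v, (1 + lam v) * η v = 1 - lam v) :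
    wtWRC E₀ (fun e => 2 * p e) lam R = (∏ v, (1 + lam v)) *
      ∑ S ∈ R.powerset, wtSG E₀ p η S * sprinkleProb E₀ (fun e => p e / (1 - p e)) S R := by
  rw [sum_congr rfl fun S hS => wtSG_mul_sprinkleProb (mem_powerset.1 hS) hRE hp, ← mul_sum,
    mul_left_comm, prod_one_add_mul_sum_prod_oddVerts (fun e he => hE₀ e (hRE he)) hη,
    wtWRC, prod_mul_distrib, prod_const]
  ring

theorem ZWRC_two_mul_eq (hE₀ : ∀ e ∈ E₀, ¬ e.IsDiag) (hp : ∀ e ∈ E₀, p e ≠ 1)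
    (hη : ∀ v, (1 + lam v) * η v = 1 - lam v) :
    ZWRC E₀ (fun e => 2 * p e) lam = (∏ v, (1 + lam v)) * ZSG E₀ p η := by
  set r : Sym2 V → ℝ := fun e => p e / (1 - p e)
  have hswap : ∀ R S, R ∈ E₀.powerset ∧ S ∈ R.powerset ↔ R ∈ Icc S E₀ ∧ S ∈ E₀.powerset := by
    simp only [mem_powerset, mem_Icc]
    exact fun R S => ⟨fun h => ⟨⟨h.2, h.1⟩, h.2.trans h.1⟩, fun h => ⟨h.1.2, h.1.1⟩⟩
  calc ZWRC E₀ (fun e => 2 * p e) lam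
      = (∏ v, (1 + lam v)) *
          ∑ R ∈ E₀.powerset, ∑ S ∈ R.powerset, wtSG E₀ p η S * sprinkleProb E₀ r S R := by
        rw [ZWRC, mul_sum]
        exact sum_congr rfl fun R hR => wtWRC_two_mul_eq (mem_powerset.1 hR) hE₀ hp hη
    _ = (∏ v, (1 + lam v)) *
          ∑ S ∈ E₀.powerset, wtSG E₀ p η S * ∑ R ∈ Icc S E₀, sprinkleProb E₀ r S R := by
        simp only [sum_comm' hswap, mul_sum]
    _ = (∏ v, (1 + lam v)) * ZSG E₀ p η := by
        rw [ZSG]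
        congr 1
        exact sum_congr rfl fun S hS => by rw [sum_Icc_sprinkleProb (mem_powerset.1 hS), mul_one]

end Coupling

/-- Coupling between the subgraph-world model `(G; p, η)` and the weighted random cluster
model `(G; 2p, λ)`: sampling `S` from the subgraph-world model and independently adding each
edge `e ∈ E \ S` with probability `p_e/(1−p_e)` yields a sample from `π_wrc(G; 2p, λ)`. -/
theorem sg_wrc_coupling {V : Type*} [Fintype V] [DecidableEq V]
    (G : SimpleGraph V) [DecidableRel G.Adj]
    (p : Sym2 V → ℝ) (lam : V → ℝ) (η : V → ℝ)
    (hp : ∀ e ∈ G.edgeFinset, 0 < p e ∧ p e < 1 / 2)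
    (hlam : ∀ v : V, 0 < lam v ∧ lam v ≤ 1)
    (hη : ∀ v : V, η v = (1 - lam v) / (1 + lam v)) :
    ∀ R ∈ G.edgeFinset.powerset,
      piWRC G.edgeFinset (fun e => 2 * p e) lam R =
        ∑ S ∈ R.powerset, piSG G.edgeFinset p η S *
          (∏ e ∈ R \ S, p e / (1 - p e)) *
          (∏ f ∈ G.edgeFinset \ R, (1 - p f / (1 - p f))) := by
  intro R hR
  have hloopless : ∀ e ∈ G.edgeFinset, ¬ e.IsDiag :=
    fun e he => G.not_isDiag_of_mem_edgeSet (SimpleGraph.mem_edgeFinset.1 he)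
  have hp1 : ∀ e ∈ G.edgeFinset, p e ≠ 1 := fun e he => ne_of_lt (by linarith [hp e he])
  have hlam1 : ∀ v, 1 + lam v ≠ 0 := fun v => (by linarith [hlam v] : 0 < 1 + lam v).ne'
  have hη' : ∀ v, (1 + lam v) * η v = 1 - lam v := fun v => by
    rw [hη v, mul_div_cancel₀ _ (hlam1 v)]
  rw [piWRC, wtWRC_two_mul_eq (mem_powerset.1 hR) hloopless hp1 hη',
    ZWRC_two_mul_eq hloopless hp1 hη',
    mul_div_mul_left _ _ (prod_ne_zero_iff.2 fun v _ => hlam1 v), sum_div]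
  refine sum_congr rfl fun S _ => ?_
  rw [piSG, sprinkleProb]
  ring

end
end
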